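/- arXiv:1003.0006 — 3 statements merged into one kernel-verified Lean document; each statement's English description precedes it below -/
import Mathlib

section
/- For all real numbers u, v > 0, one has u − (v + u)·log(u/v + 1) ≤ −(u²/2)/(v + u/3). -/
/-!
Put `x = u / v`. Dividing by `v`, the claim is `3x² / (2(3 + x)) ≤ (1 + x) log (1 + x) - x`
for `x ≥ 0`. Both sides vanish at `0`, and the derivative of their difference is
`log (1 + x) - 3x(6 + x) / (2(3 + x)²)`, which is at least
`2x / (x + 2) - 3x(6 + x) / (2(3 + x)²) = x³ / (2(x + 2)(3 + x)²) ≥ 0`.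
-/

open Real Set

noncomputable def bennett (x : ℝ) : ℝ := (1 + x) * log (1 + x) - x

lemma hasDerivAt_bennett {x : ℝ} (hx : x ≠ -1) : HasDerivAt bennett (log (1 + x)) x := by
  have hx' : 1 + x ≠ 0 := fun h => hx (by linarith)
  have hlog : HasDerivAt (fun y => log (1 + y)) (1 / (1 + x)) x := by
    simpa using ((hasDerivAt_id x).const_add 1).log hx'
  refine ((((hasDerivAt_id' x).const_add 1).mul hlog).sub (hasDerivAt_id' x)).congr_deriv ?_
  field_simp
  ring

lemma hasDerivAt_three_mul_sq_div {x : ℝ} (hx : x ≠ -3) :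
    HasDerivAt (fun y => 3 * y ^ 2 / (2 * (3 + y))) (3 * x * (6 + x) / (2 * (3 + x) ^ 2)) x := by
  have hx' : 2 * (3 + x) ≠ 0 := fun h => hx (by linarith)
  refine (((hasDerivAt_pow 2 x).const_mul 3).div
    (((hasDerivAt_id' x).const_add 3).const_mul 2) hx').congr_deriv ?_
  field_simp
  ring

theorem three_mul_sq_div_le_bennett {x : ℝ} (hx : 0 ≤ x) :
    3 * x ^ 2 / (2 * (3 + x)) ≤ bennett x := by
  set g : ℝ → ℝ := fun y => bennett y - 3 * y ^ 2 / (2 * (3 + y))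
  have hg : ∀ y ∈ Ici (0 : ℝ),
      HasDerivAt g (log (1 + y) - 3 * y * (6 + y) / (2 * (3 + y) ^ 2)) y := fun y hy =>
    (hasDerivAt_bennett (by linarith [mem_Ici.mp hy] : (-1 : ℝ) < y).ne').sub
      (hasDerivAt_three_mul_sq_div (by linarith [mem_Ici.mp hy] : (-3 : ℝ) < y).ne')
  have hmono : MonotoneOn g (Ici 0) := by
    refine monotoneOn_of_hasDerivWithinAt_nonneg (convex_Ici 0)
      (fun y hy => (hg y hy).continuousAt.continuousWithinAt)
      (fun y hy => (hg y (interior_subset hy)).hasDerivWithinAt) fun y hy => ?_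
    have hy : 0 ≤ y := le_of_lt (by simpa using hy)
    have hrat : 3 * y * (6 + y) / (2 * (3 + y) ^ 2) ≤ 2 * y / (y + 2) := by
      rw [div_le_div_iff₀ (by positivity) (by positivity)]
      nlinarith [pow_nonneg hy 3]
    linarith [le_log_one_add_of_nonneg hy]
  simpa [g, bennett] using hmono self_mem_Ici hx hx

theorem stmt_0 (u v : ℝ) (hu : 0 < u) (hv : 0 < v) :
    u - (v + u) * Real.log (u / v + 1) ≤ -(u ^ 2 / 2) / (v + u / 3) := by
  have key := three_mul_sq_div_le_bennett (div_pos hu hv).le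
  have hbennett : bennett (u / v) = ((v + u) * log (u / v + 1) - u) / v := by
    rw [bennett, add_comm 1]
    field_simp
    ring
  have hbound : 3 * (u / v) ^ 2 / (2 * (3 + u / v)) = (u ^ 2 / 2) / (v + u / 3) / v := by
    field_simp
  rw [hbennett, hbound, div_le_div_iff_of_pos_right hv] at key
  rw [neg_div]
  linarith
end

section
/- Let E be a Polish space with its Borel σ-algebra and let ρ_disc(x,y) := 1 if x ≠ y and := 0 if x = y (the discrete metric, which is lower semicontinuous on E × E). Let (κ_t)_{t≥0} be a Markov semigroup on E and assume t ↦ W_{ρ_disc}(κ_t(x), κ_t(y)) is Borel measurable for each x, y. Then the following are equivalent: (a) there exists M > 0 such that ∫_0^∞ W_{ρ_disc}(κ_t(x), κ_t(y)) dt ≤ M for all x, y ∈ E; (b) there exists T > 0 such that sup_{x,y ∈ E} W_{ρ_disc}(κ_T(x), κ_T(y)) < 1. -/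
open MeasureTheory ProbabilityTheory

/-- The optimal coupling cost `W_ρ(μ, ν) = inf { ∫ ρ dπ : π a coupling of μ and ν }`. -/
noncomputable def couplingCost {E : Type*} [MeasurableSpace E]
    (ρ : E × E → ENNReal) (μ ν : Measure E) : ENNReal :=
  ⨅ π ∈ {π : Measure (E × E) |
      IsProbabilityMeasure π ∧ π.map Prod.fst = μ ∧ π.map Prod.snd = ν},
    ∫⁻ p, ρ p ∂π

/-- The discrete metric on `E`, valued in `[0,∞]`. -/
noncomputable def discreteDist {E : Type*} : E × E → ENNReal :=
  fun p => open scoped Classical in if p.1 = p.2 then 0 else 1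

/-!
For probability measures the discrete coupling cost is the total variation distance
`sup_A (μ A - ν A)`: a Hahn decomposition `μ = ξ + p`, `ν = ξ + q` with `p(E) = q(E) ≤ TV(μ, ν)`
yields the coupling that is the identity on `ξ` and the normalized product `p ⊗ q / p(E)` on the
rest. With the same decomposition, Dobrushin's estimate shows that `W_t(x, y) := W(κ_t x, κ_t y)`
satisfies `W_{t+s}(x, y) ≤ ‖S_s‖_osc · W_t(x, y)`. In particular `W_t(x, y)` is nonincreasing in
`t`, so `T · W_T ≤ ∫ W ≤ M`, and `T = 2M` gives `‖S_T‖_osc ≤ 1/2`. Conversely, if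
`‖S_T‖_osc = c < 1` then `W_t ≤ c ^ ⌊t / T⌋`, whence `∫ W ≤ T / (1 - c)`.
-/

open Set
open scoped ENNReal

section TotalVariation

variable {E : Type*} [MeasurableSpace E]

noncomputable def tvDist (μ ν : Measure E) : ℝ≥0∞ :=
  ⨆ (A : Set E) (_ : MeasurableSet A), μ A - ν A

lemma tvDist_le_one (μ ν : Measure E) [IsProbabilityMeasure μ] : tvDist μ ν ≤ 1 :=
  iSup₂_le fun _ _ => tsub_le_self.trans prob_le_one

lemma exists_add_eq_add_tvDist (μ ν : Measure E) [IsFiniteMeasure μ] [IsFiniteMeasure ν]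
    (hμν : μ univ = ν univ) :
    ∃ ξ p q : Measure E, IsFiniteMeasure p ∧ IsFiniteMeasure q ∧ μ = ξ + p ∧ ν = ξ + q ∧
      p univ = q univ ∧ p univ ≤ tvDist μ ν := by
  obtain ⟨S, hS, hνμ_S, hμν_Sc⟩ := hahn_decomposition μ ν
  have hle : ν.restrict S ≤ μ.restrict S := Measure.le_iff.mpr fun A hA => by
    simpa only [Measure.restrict_apply hA] using hνμ_S _ (hA.inter hS) inter_subset_right
  have hle' : μ.restrict Sᶜ ≤ ν.restrict Sᶜ := Measure.le_iff.mpr fun A hA => by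
    simpa only [Measure.restrict_apply hA] using hμν_Sc _ (hA.inter hS.compl) inter_subset_right
  have hμ : μ = (ν.restrict S + μ.restrict Sᶜ) + (μ.restrict S - ν.restrict S) := by
    conv_lhs => rw [← Measure.restrict_add_restrict_compl (μ := μ) hS,
      ← Measure.sub_add_cancel_of_le hle]
    ac_rfl
  have hν : ν = (ν.restrict S + μ.restrict Sᶜ) + (ν.restrict Sᶜ - μ.restrict Sᶜ) := by
    conv_lhs => rw [← Measure.restrict_add_restrict_compl (μ := ν) hS,
      ← Measure.sub_add_cancel_of_le hle']
    ac_rfl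
  refine ⟨_, _, _, inferInstance, inferInstance, hμ, hν, ?_, ?_⟩
  · rw [← ENNReal.add_right_inj (measure_ne_top (ν.restrict S + μ.restrict Sᶜ) univ),
      ← Measure.add_apply, ← Measure.add_apply, ← hμ, ← hν, hμν]
  · rw [Measure.sub_apply MeasurableSet.univ hle, Measure.restrict_apply_univ,
      Measure.restrict_apply_univ]
    exact le_iSup₂_of_le S hS le_rfl

/-- Dobrushin's contraction estimate. -/
lemma tvDist_bind_le (K : Kernel E E) (μ ν : Measure E) [IsFiniteMeasure μ] [IsFiniteMeasure ν]
    (hμν : μ univ = ν univ) :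
    tvDist (μ.bind K) (ν.bind K) ≤ (⨆ (u : E) (v : E), tvDist (K u) (K v)) * tvDist μ ν := by
  set β := ⨆ (u : E) (v : E), tvDist (K u) (K v)
  obtain ⟨ξ, p, q, -, -, rfl, rfl, hpq, hp⟩ := exists_add_eq_add_tvDist μ ν hμν
  refine iSup₂_le fun A hA => tsub_le_iff_left.mpr ?_
  set b := ⨅ u, K u A
  have hb_le : ∀ u, b ≤ K u A := iInf_le _
  have hle_add_b : ∀ u, K u A ≤ b + β := fun u => by
    rw [ENNReal.iInf_add]
    refine le_iInf fun v => tsub_le_iff_left.mp ?_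
    exact (le_iSup₂_of_le A hA le_rfl).trans (le_iSup₂ (f := fun u v => tvDist (K u) (K v)) u v)
  have hbind : ∀ ρ : Measure E, (ρ.bind K) A = ∫⁻ u, K u A ∂ρ := fun ρ =>
    Measure.bind_apply hA K.measurable.aemeasurable
  calc ((ξ + p).bind K) A = ∫⁻ u, K u A ∂ξ + ∫⁻ u, K u A ∂p := by
        rw [hbind, lintegral_add_measure]
    _ ≤ ∫⁻ u, K u A ∂ξ + (b + β) * p univ := by
        gcongr
        exact (lintegral_mono hle_add_b).trans_eq (lintegral_const _)
    _ = ∫⁻ u, K u A ∂ξ + b * q univ + β * p univ := by rw [hpq]; ring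
    _ ≤ ∫⁻ u, K u A ∂ξ + ∫⁻ u, K u A ∂q + β * tvDist (ξ + p) (ξ + q) := by
        gcongr
        exact (lintegral_const _).symm.trans_le (lintegral_mono hb_le)
    _ = ((ξ + q).bind K) A + β * tvDist (ξ + p) (ξ + q) := by
        rw [hbind, lintegral_add_measure]

end TotalVariation

section DiscreteDist

variable {E : Type*}

lemma discreteDist_le_one (z : E × E) : discreteDist z ≤ 1 := by
  unfold discreteDist
  split_ifs <;> simp

lemma discreteDist_eq_indicator : (discreteDist : E × E → ℝ≥0∞) = (diagonal E)ᶜ.indicator 1 := by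
  ext p
  by_cases h : p.1 = p.2 <;> simp [discreteDist, h]

end DiscreteDist

section Coupling

variable {E : Type*} [MeasurableSpace E]

lemma map_fst_inv_smul_prod {p q : Measure E} [IsFiniteMeasure p] [IsFiniteMeasure q]
    (hpq : p univ = q univ) : ((p univ)⁻¹ • p.prod q).map Prod.fst = p := by
  rcases eq_or_ne (p univ) 0 with h0 | h0
  · simp [Measure.measure_univ_eq_zero.mp h0]
  · rw [Measure.map_smul, Measure.map_fst_prod, smul_smul, ← hpq,
      ENNReal.inv_mul_cancel h0 (measure_ne_top _ _), one_smul]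

lemma map_snd_inv_smul_prod {p q : Measure E} [IsFiniteMeasure p] [IsFiniteMeasure q]
    (hpq : p univ = q univ) : ((p univ)⁻¹ • p.prod q).map Prod.snd = q := by
  rcases eq_or_ne (p univ) 0 with h0 | h0
  · simp [Measure.measure_univ_eq_zero.mp (hpq ▸ h0)]
  · rw [Measure.map_smul, Measure.map_snd_prod, smul_smul,
      ENNReal.inv_mul_cancel h0 (measure_ne_top _ _), one_smul]

variable [MeasurableEq E]

lemma measurable_discreteDist : Measurable (discreteDist : E × E → ℝ≥0∞) := by
  rw [discreteDist_eq_indicator]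
  exact measurable_const.indicator measurableSet_diagonal.compl

lemma tvDist_le_couplingCost (μ ν : Measure E) : tvDist μ ν ≤ couplingCost discreteDist μ ν := by
  refine le_iInf₂ fun π ⟨_, hfst, hsnd⟩ => iSup₂_le fun A hA => tsub_le_iff_left.mpr ?_
  rw [discreteDist_eq_indicator, lintegral_indicator_one measurableSet_diagonal.compl,
    ← hfst, ← hsnd, Measure.map_apply measurable_fst hA, Measure.map_apply measurable_snd hA]
  refine (measure_mono fun z hz => ?_).trans (measure_union_le _ _)
  by_cases h : z.1 = z.2
  · exact Or.inl (show z.2 ∈ A from h ▸ hz)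
  · exact Or.inr h

lemma couplingCost_le_tvDist (μ ν : Measure E) [IsProbabilityMeasure μ] [IsProbabilityMeasure ν] :
    couplingCost discreteDist μ ν ≤ tvDist μ ν := by
  obtain ⟨ξ, p, q, _, _, hμ, hν, hpq, hp⟩ := exists_add_eq_add_tvDist μ ν (by simp)
  have hΔ : Measurable fun x : E => (x, x) := measurable_id.prodMk measurable_id
  set π := ξ.map (fun x => (x, x)) + (p univ)⁻¹ • p.prod q
  have hfst : π.map Prod.fst = μ := by
    rw [Measure.map_add _ _ measurable_fst, Measure.map_map measurable_fst hΔ,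
      show Prod.fst ∘ (fun x : E => (x, x)) = id from rfl, Measure.map_id,
      map_fst_inv_smul_prod hpq, hμ]
  have hsnd : π.map Prod.snd = ν := by
    rw [Measure.map_add _ _ measurable_snd, Measure.map_map measurable_snd hΔ,
      show Prod.snd ∘ (fun x : E => (x, x)) = id from rfl, Measure.map_id,
      map_snd_inv_smul_prod hpq, hν]
  have hπ : IsProbabilityMeasure π :=
    ⟨by simpa [Measure.map_apply measurable_fst MeasurableSet.univ] using congrArg (· univ) hfst⟩
  calc couplingCost discreteDist μ ν ≤ ∫⁻ z, discreteDist z ∂π := iInf₂_le π ⟨hπ, hfst, hsnd⟩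
    _ = ∫⁻ z, discreteDist z ∂((p univ)⁻¹ • p.prod q) := by
        rw [lintegral_add_measure, lintegral_map measurable_discreteDist hΔ]
        simp [discreteDist]
    _ ≤ ((p univ)⁻¹ • p.prod q) univ := (lintegral_mono discreteDist_le_one).trans_eq lintegral_one
    _ = p univ := by
        conv_rhs => rw [← map_fst_inv_smul_prod hpq]
        rw [Measure.map_apply measurable_fst MeasurableSet.univ, preimage_univ]
    _ ≤ tvDist μ ν := hp

end Coupling

section DiscreteCouplingCost

variable {E : Type*} [MeasurableSpace E] [MeasurableEq E]

lemma couplingCost_discreteDist_eq_tvDist (μ ν : Measure E) [IsProbabilityMeasure μ]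
    [IsProbabilityMeasure ν] : couplingCost discreteDist μ ν = tvDist μ ν :=
  (couplingCost_le_tvDist μ ν).antisymm (tvDist_le_couplingCost μ ν)

lemma couplingCost_discreteDist_le_one (μ ν : Measure E) [IsProbabilityMeasure μ]
    [IsProbabilityMeasure ν] : couplingCost discreteDist μ ν ≤ 1 :=
  (couplingCost_le_tvDist μ ν).trans (tvDist_le_one μ ν)

lemma couplingCost_discreteDist_bind_le (K : Kernel E E) [IsMarkovKernel K] (μ ν : Measure E)
    [IsProbabilityMeasure μ] [IsProbabilityMeasure ν] :
    couplingCost discreteDist (μ.bind K) (ν.bind K) ≤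
      (⨆ (u : E) (v : E), couplingCost discreteDist (K u) (K v)) *
        couplingCost discreteDist μ ν := by
  simp_rw [couplingCost_discreteDist_eq_tvDist]
  exact tvDist_bind_le K μ ν (by simp)

end DiscreteCouplingCost

section MarkovSemigroup

variable {E : Type*} [MeasurableSpace E]

/-- The oscillation norm `‖S_t‖_osc` of the semigroup, in its coupling form. -/
noncomputable def oscNorm (κ : ℝ → Kernel E E) (t : ℝ) : ℝ≥0∞ :=
  ⨆ (x : E) (y : E), couplingCost discreteDist (κ t x) (κ t y)

variable [MeasurableEq E] {κ : ℝ → Kernel E E}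
  (hmk : ∀ t : ℝ, 0 ≤ t → IsMarkovKernel (κ t))
  (hsg : ∀ s t : ℝ, 0 ≤ s → 0 ≤ t → ∀ x : E, κ (t + s) x = (κ t x).bind (κ s))
include hmk

lemma oscNorm_le_one {t : ℝ} (ht : 0 ≤ t) : oscNorm κ t ≤ 1 :=
  have := hmk t ht
  iSup₂_le fun _ _ => couplingCost_discreteDist_le_one _ _

include hsg

lemma couplingCost_add_le {s t : ℝ} (hs : 0 ≤ s) (ht : 0 ≤ t) (x y : E) :
    couplingCost discreteDist (κ (t + s) x) (κ (t + s) y) ≤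
      oscNorm κ s * couplingCost discreteDist (κ t x) (κ t y) := by
  have := hmk s hs
  have := hmk t ht
  rw [hsg s t hs ht x, hsg s t hs ht y]
  exact couplingCost_discreteDist_bind_le (κ s) _ _

lemma antitoneOn_couplingCost (x y : E) :
    AntitoneOn (fun t => couplingCost discreteDist (κ t x) (κ t y)) (Ici 0) := by
  intro s hs t _ hst
  have h := couplingCost_add_le hmk hsg (sub_nonneg.2 hst) hs x y
  rw [add_sub_cancel] at h
  exact h.trans (mul_le_of_le_one_left' (oscNorm_le_one hmk (sub_nonneg.2 hst)))

end MarkovSemigroup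

section DecayIntegral

variable {f : ℝ → ℝ≥0∞}

lemma AntitoneOn.le_ofReal_div_of_setLIntegral_Ioi_le (hf : AntitoneOn f (Ici 0)) {M T : ℝ}
    (hT : 0 < T) (hM : ∫⁻ t in Ioi 0, f t ≤ ENNReal.ofReal M) : f T ≤ ENNReal.ofReal (M / T) := by
  rw [ENNReal.ofReal_div_of_pos hT, ENNReal.le_div_iff_mul_le
    (Or.inl (ENNReal.ofReal_pos.2 hT).ne') (Or.inl ENNReal.ofReal_ne_top)]
  calc f T * ENNReal.ofReal T = ∫⁻ _ in Ioc 0 T, f T := by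
        rw [setLIntegral_const, Real.volume_Ioc, sub_zero]
    _ ≤ ∫⁻ t in Ioc 0 T, f t :=
        setLIntegral_mono' measurableSet_Ioc fun t ht => hf (le_of_lt ht.1) hT.le ht.2
    _ ≤ ∫⁻ t in Ioi 0, f t := lintegral_mono_set Ioc_subset_Ioi_self
    _ ≤ ENNReal.ofReal M := hM

lemma setLIntegral_Ioi_le_of_le_mul {T : ℝ} {c : ℝ≥0∞} (hT : 0 < T)
    (hf : ∀ t, 0 ≤ t → f t ≤ 1) (hfT : ∀ t, 0 ≤ t → f (t + T) ≤ c * f t) :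
    ∫⁻ t in Ioi 0, f t ≤ (1 - c)⁻¹ * ENNReal.ofReal T := by
  have hpow : ∀ n : ℕ, ∀ t, n * T ≤ t → f t ≤ c ^ n := by
    intro n
    induction n with
    | zero => intro t ht; simpa using hf t (by simpa using ht)
    | succ n ih =>
      intro t ht
      have hn : n * T ≤ t - T := by push_cast at ht; linarith
      calc f t = f (t - T + T) := by rw [sub_add_cancel]
        _ ≤ c * f (t - T) := hfT _ ((by positivity : (0 : ℝ) ≤ n * T).trans hn)
        _ ≤ c * c ^ n := by gcongr; exact ih _ hn
        _ = c ^ (n + 1) := (pow_succ' c n).symm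
  have hcover : Ioi (0 : ℝ) ⊆ ⋃ n : ℕ, Ico (n * T) ((n + 1) * T) := by
    intro t ht
    have htT : 0 ≤ t / T := div_nonneg (le_of_lt ht) hT.le
    refine mem_iUnion.2 ⟨⌊t / T⌋₊, ?_, ?_⟩
    · exact (le_div_iff₀ hT).1 (Nat.floor_le htT)
    · exact (div_lt_iff₀ hT).1 (Nat.lt_floor_add_one _)
  calc ∫⁻ t in Ioi 0, f t ≤ ∫⁻ t in ⋃ n : ℕ, Ico (n * T) ((n + 1) * T), f t :=
        lintegral_mono_set hcover
    _ ≤ ∑' n : ℕ, ∫⁻ t in Ico (n * T) ((n + 1) * T), f t := lintegral_iUnion_le _ _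
    _ ≤ ∑' n : ℕ, c ^ n * ENNReal.ofReal T := by
        refine ENNReal.tsum_le_tsum fun n => ?_
        calc ∫⁻ t in Ico (n * T) ((n + 1) * T), f t ≤ ∫⁻ _ in Ico (n * T) ((n + 1) * T), c ^ n :=
              setLIntegral_mono' measurableSet_Ico fun t ht => hpow n t ht.1
          _ = c ^ n * ENNReal.ofReal T := by
              rw [setLIntegral_const, Real.volume_Ico]
              ring_nf
    _ = (1 - c)⁻¹ * ENNReal.ofReal T := by rw [ENNReal.tsum_mul_right, ENNReal.tsum_geometric]

end DecayIntegral

theorem stmt_11_general {E : Type*} [TopologicalSpace E] [PolishSpace E]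
    [MeasurableSpace E] [BorelSpace E]
    (κ : ℝ → Kernel E E)
    (hmk : ∀ t : ℝ, 0 ≤ t → IsMarkovKernel (κ t))
    (hsg : ∀ s t : ℝ, 0 ≤ s → 0 ≤ t → ∀ x : E, κ (t + s) x = (κ t x).bind (κ s)) :
    (∃ M : ℝ, 0 < M ∧ ∀ x y : E,
        (∫⁻ t in Set.Ioi (0:ℝ), couplingCost discreteDist (κ t x) (κ t y)) ≤
          ENNReal.ofReal M) ↔
    (∃ T : ℝ, 0 < T ∧
        (⨆ (x : E) (y : E), couplingCost discreteDist (κ T x) (κ T y)) < 1) := by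
  constructor
  · rintro ⟨M, hM, hint⟩
    refine ⟨2 * M, by positivity, (iSup₂_le fun x y => ?_).trans_lt
      (ENNReal.ofReal_lt_one.2 (by norm_num : (1 / 2 : ℝ) < 1))⟩
    have h := (antitoneOn_couplingCost hmk hsg x y).le_ofReal_div_of_setLIntegral_Ioi_le
      (T := 2 * M) (by positivity) (hint x y)
    rwa [show M / (2 * M) = 1 / 2 by field_simp] at h
  · rintro ⟨T, hT, hc : oscNorm κ T < 1⟩
    set B := (1 - oscNorm κ T)⁻¹ * ENNReal.ofReal T
    have hB : B ≠ ⊤ := ENNReal.mul_ne_top (ENNReal.inv_ne_top.2 (tsub_pos_of_lt hc).ne')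
      ENNReal.ofReal_ne_top
    refine ⟨B.toReal + 1, by positivity, fun x y => ?_⟩
    calc ∫⁻ t in Ioi 0, couplingCost discreteDist (κ t x) (κ t y) ≤ B :=
          setLIntegral_Ioi_le_of_le_mul hT
            (fun t ht => have := hmk t ht; couplingCost_discreteDist_le_one _ _)
            (fun t ht => couplingCost_add_le hmk hsg hT.le ht x y)
      _ ≤ ENNReal.ofReal (B.toReal + 1) :=
          (ENNReal.le_ofReal_iff_toReal_le hB (by positivity)).2 (by linarith)

theorem stmt_11 {E : Type*} [TopologicalSpace E] [PolishSpace E]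
    [MeasurableSpace E] [BorelSpace E]
    (κ : ℝ → Kernel E E)
    (hmk : ∀ t : ℝ, 0 ≤ t → IsMarkovKernel (κ t))
    (hsg : ∀ s t : ℝ, 0 ≤ s → 0 ≤ t → ∀ x : E, κ (t + s) x = (κ t x).bind (κ s))
    (hWmeas : ∀ x y : E,
      Measurable fun t : ℝ => couplingCost discreteDist (κ t x) (κ t y)) :
    (∃ M : ℝ, 0 < M ∧ ∀ x y : E,
        (∫⁻ t in Set.Ioi (0:ℝ), couplingCost discreteDist (κ t x) (κ t y)) ≤
          ENNReal.ofReal M) ↔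
    (∃ T : ℝ, 0 < T ∧
        (⨆ (x : E) (y : E), couplingCost discreteDist (κ T x) (κ T y)) < 1) :=
  stmt_11_general κ hmk hsg
end

section
/- For all real numbers m, n ≥ 1 and all t ≥ 0, ∫_0^t (1 + s)^{−m/2}·(1 + t − s)^{−n/2} ds ≤ (1 + t)^{−1/2} · ( ∫_0^t (1 + s)^{−(m−1)/2}·(1 + t − s)^{−n/2} ds + ∫_0^t (1 + s)^{−m/2}·(1 + t − s)^{−(n−1)/2} ds ). -/
open Real intervalIntegral

lemma cont_aux (t e₁ e₂ : ℝ) (ht : 0 ≤ t) :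
    IntervalIntegrable (fun s => (1 + s) ^ e₁ * (1 + t - s) ^ e₂)
      MeasureTheory.volume 0 t := by
  apply ContinuousOn.intervalIntegrable
  have huIcc : Set.uIcc (0:ℝ) t = Set.Icc 0 t := Set.uIcc_of_le ht
  apply ContinuousOn.mul
  · apply ContinuousOn.rpow_const (by fun_prop)
    intro s hs
    rw [huIcc] at hs
    exact Or.inl (ne_of_gt (by linarith [hs.1]))
  · apply ContinuousOn.rpow_const (by fun_prop)
    intro s hs
    rw [huIcc] at hs
    have : s ≤ t := hs.2
    exact Or.inl (ne_of_gt (by nlinarith [hs.1]))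

theorem stmt_18 (m n : ℝ) (hm : 1 ≤ m) (hn : 1 ≤ n) (t : ℝ) (ht : 0 ≤ t) :
    (∫ s in (0:ℝ)..t, (1 + s) ^ (-m/2) * (1 + t - s) ^ (-n/2))
      ≤ (1 + t) ^ (-(1/2) : ℝ) *
        ((∫ s in (0:ℝ)..t, (1 + s) ^ (-(m - 1)/2) * (1 + t - s) ^ (-n/2)) +
         (∫ s in (0:ℝ)..t, (1 + s) ^ (-m/2) * (1 + t - s) ^ (-(n - 1)/2))) := by
  have h1 := cont_aux t (-(m-1)/2) (-n/2) ht
  have h2 := cont_aux t (-m/2) (-(n-1)/2) ht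
  have h0 := cont_aux t (-m/2) (-n/2) ht
  rw [← intervalIntegral.integral_add h1 h2, ← intervalIntegral.integral_const_mul]
  apply intervalIntegral.integral_mono_on ht h0
  · exact ((h1.add h2).const_mul _)
  · intro s hs
    obtain ⟨hs0, hst⟩ := hs
    have ha : (0:ℝ) < 1 + s := by linarith
    have hb : (0:ℝ) < 1 + t - s := by linarith
    have hc : (0:ℝ) < 1 + t := by linarith
    have key : (1+t) ^ ((1:ℝ)/2) ≤ (1+s) ^ ((1:ℝ)/2) + (1+t-s) ^ ((1:ℝ)/2) := by
      rw [← Real.sqrt_eq_rpow, ← Real.sqrt_eq_rpow, ← Real.sqrt_eq_rpow]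
      have h2 : (1+t) ≤ (Real.sqrt (1+s) + Real.sqrt (1+t-s))^2 := by
        nlinarith [Real.sq_sqrt ha.le, Real.sq_sqrt hb.le, Real.sqrt_nonneg (1+s),
          Real.sqrt_nonneg (1+t-s)]
      calc Real.sqrt (1+t) ≤ Real.sqrt ((Real.sqrt (1+s) + Real.sqrt (1+t-s))^2) :=
            Real.sqrt_le_sqrt h2
        _ = _ := Real.sqrt_sq (by positivity)
    -- rewrite exponents
    have ea : (1+s) ^ (-(m-1)/2) = (1+s) ^ (-m/2) * (1+s) ^ ((1:ℝ)/2) := by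
      rw [← Real.rpow_add ha]; ring_nf
    have eb : (1+t-s) ^ (-(n-1)/2) = (1+t-s) ^ (-n/2) * (1+t-s) ^ ((1:ℝ)/2) := by
      rw [← Real.rpow_add hb]; ring_nf
    rw [ea, eb]
    have hct : (1+t) ^ (-(1/2):ℝ) = ((1+t) ^ ((1:ℝ)/2))⁻¹ := by
      rw [← Real.rpow_neg_one, ← Real.rpow_mul hc.le]; ring_nf
    rw [hct]
    have h12 : (0:ℝ) < (1+t) ^ ((1:ℝ)/2) := Real.rpow_pos_of_pos hc _
    rw [inv_mul_eq_div, le_div_iff₀ h12]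
    have hA : (0:ℝ) < (1+s) ^ (-m/2) := Real.rpow_pos_of_pos ha _
    have hB : (0:ℝ) < (1+t-s) ^ (-n/2) := Real.rpow_pos_of_pos hb _
    calc (1+s) ^ (-m/2) * (1+t-s) ^ (-n/2) * (1+t) ^ ((1:ℝ)/2)
        ≤ (1+s) ^ (-m/2) * (1+t-s) ^ (-n/2) *
          ((1+s) ^ ((1:ℝ)/2) + (1+t-s) ^ ((1:ℝ)/2)) := by
          apply mul_le_mul_of_nonneg_left key (by positivity)
      _ = (1+s) ^ (-m/2) * (1+s) ^ ((1:ℝ)/2) * (1+t-s) ^ (-n/2) +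
          (1+s) ^ (-m/2) * ((1+t-s) ^ (-n/2) * (1+t-s) ^ ((1:ℝ)/2)) := by ring
end
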